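/- arXiv:2502.13643 — 3 statements merged into one kernel-verified Lean document; each statement's English description precedes it below -/
import Mathlib

section
/- Let n ≥ 2, let S ⊂ ℝⁿ be a finite nonempty set, and for γ ∈ (0,1) define weights γ_i = γ(1-γ)^{i-1} for i < n and γ_n = (1-γ)^{n-1}. Then there exists γ₀ ∈ (0,1) such that for all γ ∈ (γ₀,1), every minimizer over S of the weighted sum Σ_{i=1}^n γ_i·v_i (where v = (v_1,…,v_n) ∈ S) is a lexicographic minimum of S (minimizing coordinates in order 1, 2, …, n). -/
open Finset

theorem pair_lemma (n : ℕ) (hn : 2 ≤ n) (w : ℝ → Fin n → ℝ)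
    (hw : ∀ γ (i : Fin n),
      w γ i = if (i : ℕ) < n - 1 then γ * (1 - γ) ^ (i : ℕ) else (1 - γ) ^ (n - 1))
    (u v : Fin n → ℝ) (h : toLex u < toLex v) :
    ∃ γ₁ ∈ Set.Ioo (0:ℝ) 1, ∀ γ ∈ Set.Ioo γ₁ 1,
      ∑ i, w γ i * u i < ∑ i, w γ i * v i := by
  obtain ⟨k, hk', hlt⟩ := h
  have hk : ∀ j : Fin n, j < k → u j = v j := hk'
  have hkn : (k : ℕ) ≤ n - 1 := Nat.le_sub_one_of_lt k.isLt
  have hlt : u k < v k := hlt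
  rcases eq_or_lt_of_le hkn with hke | hklt
  · -- k is the last coordinate: works for all γ ∈ (0,1)
    refine ⟨1/2, by norm_num, fun γ hγ => ?_⟩
    have h1γ : 0 < 1 - γ := by linarith [hγ.2]
    have hsum : ∀ x : Fin n → ℝ, ∑ i, w γ i * x i
        = w γ k * x k + ∑ i ∈ univ.erase k, w γ i * x i := by
      intro x; rw [add_comm, Finset.sum_erase_add _ _ (mem_univ k)]
    rw [hsum u, hsum v]
    have heq : ∑ i ∈ univ.erase k, w γ i * u i = ∑ i ∈ univ.erase k, w γ i * v i := by
      refine Finset.sum_congr rfl fun i hi => ?_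
      have hik : (i:ℕ) ≠ (k:ℕ) := Fin.val_ne_of_ne (Finset.mem_erase.mp hi).1
      have h2 := i.isLt
      have : i < k := by
        rw [Fin.lt_def]; omega
      rw [hk i this]
    rw [heq]
    have hwk : w γ k = (1 - γ) ^ (n - 1) := by rw [hw]; simp [hke]
    have : 0 < w γ k := by rw [hwk]; positivity
    nlinarith
  · -- k < n - 1 : continuity argument
    set c : ℝ → Fin n → ℝ := fun γ i =>
      if (i:ℕ) < (k:ℕ) then 0
      else if (i:ℕ) < n - 1 then γ * (1 - γ) ^ ((i:ℕ) - (k:ℕ))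
      else (1 - γ) ^ (n - 1 - (k:ℕ)) with hc
    set g : ℝ → ℝ := fun γ => ∑ i, c γ i * (v i - u i) with hg
    have hgcont : Continuous g := by
      apply continuous_finset_sum
      intro i _
      apply Continuous.mul _ continuous_const
      simp only [hc]
      split_ifs
      · exact continuous_const
      · fun_prop
      · fun_prop
    have hg1 : g 1 = v k - u k := by
      simp only [hg]
      rw [Finset.sum_eq_single k]
      · simp only [hc]
        rw [if_neg (by omega), if_pos hklt]
        simp
      case h₁ => intro h; exact absurd (mem_univ k) h
      · intro i _ hik
        have hik' : (i:ℕ) ≠ (k:ℕ) := Fin.val_ne_of_ne hik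
        simp only [hc]
        rcases lt_or_gt_of_ne hik' with h' | h'
        · rw [if_pos h']; ring
        · rw [if_neg (by omega)]
          have h0 : (1:ℝ) - 1 = 0 := by ring
          split_ifs with h2
          · rw [h0, zero_pow (by omega)]; ring
          · rw [h0, zero_pow (by omega)]; ring
    have hg1pos : 0 < g 1 := by rw [hg1]; linarith
    have hev : ∀ᶠ γ in nhds (1:ℝ), 0 < g γ :=
      (hgcont.continuousAt).eventually (eventually_gt_nhds hg1pos)
    obtain ⟨δ, hδpos, hδ⟩ := Metric.eventually_nhds_iff.mp hev
    refine ⟨max (1/2) (1 - δ/2), ⟨by positivity, by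
      apply max_lt (by norm_num); linarith⟩, fun γ hγ => ?_⟩
    obtain ⟨hγ1, hγ2⟩ := hγ
    have hγhalf : 1/2 < γ := lt_of_le_of_lt (le_max_left _ _) hγ1
    have hγδ : 1 - δ/2 < γ := lt_of_le_of_lt (le_max_right _ _) hγ1
    have h1γ : 0 < 1 - γ := by linarith
    have hgpos : 0 < g γ := by
      apply hδ
      rw [Real.dist_eq, abs_sub_lt_iff]
      constructor <;> linarith
    -- key identity
    have hid : ∑ i, w γ i * v i - ∑ i, w γ i * u i = (1 - γ) ^ (k:ℕ) * g γ := by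
      rw [← Finset.sum_sub_distrib]
      simp only [hg]
      rw [Finset.mul_sum]
      refine Finset.sum_congr rfl fun i _ => ?_
      rcases lt_or_ge (i:ℕ) (k:ℕ) with h' | h'
      · have : u i = v i := hk i (by rw [Fin.lt_def]; exact h')
        simp only [hc, if_pos h', this]
        ring
      · simp only [hc, if_neg (not_lt.mpr h')]
        rw [hw]
        split_ifs with h2
        · have e : (1-γ)^(i:ℕ) = (1-γ)^(k:ℕ) * (1-γ)^((i:ℕ)-(k:ℕ)) := by
            rw [← pow_add]; congr 1; omega
          rw [e]; ring
        · have e : (1-γ)^(n-1) = (1-γ)^(k:ℕ) * (1-γ)^(n-1-(k:ℕ)) := by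
            rw [← pow_add]; congr 1; omega
          rw [e]; ring
    have hpk : 0 < (1 - γ) ^ (k:ℕ) := by positivity
    nlinarith

/-- For a finite nonempty S ⊂ ℝⁿ (n ≥ 2) and weights γ_i = γ(1-γ)^{i-1} for
i < n, γ_n = (1-γ)^{n-1}, there exists γ₀ ∈ (0,1) such that for all
γ ∈ (γ₀,1), every minimizer over S of the weighted sum Σ γ_i v_i is a
lexicographic minimum of S. -/
theorem weighted_sum_is_lex_min (n : ℕ) (hn : 2 ≤ n)
    (S : Finset (Fin n → ℝ)) (hS : S.Nonempty)
    (w : ℝ → Fin n → ℝ)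
    (hw : ∀ γ (i : Fin n),
      w γ i = if (i : ℕ) < n - 1 then γ * (1 - γ) ^ (i : ℕ) else (1 - γ) ^ (n - 1)) :
    ∃ γ₀ ∈ Set.Ioo (0 : ℝ) 1, ∀ γ ∈ Set.Ioo γ₀ 1, ∀ v ∈ S,
      (∀ u ∈ S, ∑ i, w γ i * v i ≤ ∑ i, w γ i * u i) →
      ∀ u ∈ S, toLex v ≤ toLex u := by
  have key : ∀ p : (Fin n → ℝ) × (Fin n → ℝ), ∃ γ₁, γ₁ ∈ Set.Ioo (0:ℝ) 1 ∧
      (toLex p.1 < toLex p.2 → ∀ γ ∈ Set.Ioo γ₁ 1,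
        ∑ i, w γ i * p.1 i < ∑ i, w γ i * p.2 i) := by
    intro p
    by_cases h : toLex p.1 < toLex p.2
    · obtain ⟨γ₁, hm, hsp⟩ := pair_lemma n hn w hw p.1 p.2 h
      exact ⟨γ₁, hm, fun _ => hsp⟩
    · exact ⟨1/2, by norm_num, fun h' => absurd h' h⟩
  choose γc hγc hkey using key
  have hne : (S ×ˢ S).Nonempty := hS.product hS
  refine ⟨(S ×ˢ S).sup' hne γc, ⟨?_, ?_⟩, ?_⟩
  · obtain ⟨p, hp⟩ := hne
    exact lt_of_lt_of_le (hγc p).1 (Finset.le_sup' γc hp)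
  · rw [Finset.sup'_lt_iff]
    exact fun p _ => (hγc p).2
  · intro γ hγ v hv hmin u hu
    by_contra hcon
    replace hcon : toLex u < toLex v := by
      have inst : IsTrichotomous (∀ _ : Fin n, ℝ) (Pi.Lex (·<·) (@fun _ => (·<·))) :=
        Pi.isTrichotomous_lex _ _ wellFounded_lt
      have h2 : ¬ (u = v ∨ toLex v < toLex u) := fun h =>
        hcon (h.elim (fun e => Or.inl e.symm) Or.inr)
      rcases @trichotomous _ _ inst u v with h | h | h
      · exact h
      · exact absurd (Or.inl h) h2
      · exact absurd (Or.inr h) h2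
    have hpmem : (u, v) ∈ S ×ˢ S := Finset.mem_product.mpr ⟨hu, hv⟩
    have hle : γc (u, v) ≤ (S ×ˢ S).sup' hne γc := Finset.le_sup' γc hpmem
    have := hkey (u, v) hcon γ ⟨lt_of_le_of_lt hle hγ.1, hγ.2⟩
    exact absurd (hmin u hu) (not_le.mpr this)
end

section
/- Let A be an m×k real matrix, b ∈ ℝᵐ, c ∈ ℝᵏ, and D ∈ ℝ. Let V = sup { bᵀy : y ≥ 0, Aᵀy ≤ c } and assume V is finite and attained. Consider Z = sup { bᵀy − w·D : y ≥ 0, w ≥ 0, Aᵀy ≤ (1+w)·c }. Then: (i) if V ≤ D, then Z = V; (ii) if V > D, then Z = +∞. -/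
open Matrix

/-- Key structural fact for Benders subproblem separation: given the LP value
V = sup { bᵀy : y ≥ 0, Aᵀy ≤ c }, finite and attained, and
Z = sup { bᵀy − w·D : y ≥ 0, w ≥ 0, Aᵀy ≤ (1+w)·c }, then:
(i) if V ≤ D, then Z = V (and it is attained);
(ii) if V > D, then Z = +∞ (the objective is unbounded above). -/
theorem benders_subproblem_separation (m k : ℕ)
    (A : Matrix (Fin m) (Fin k) ℝ) (b : Fin m → ℝ) (c : Fin k → ℝ) (D : ℝ)
    (V : ℝ)
    (hV : IsGreatest {r : ℝ | ∃ y : Fin m → ℝ,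
      0 ≤ y ∧ Aᵀ *ᵥ y ≤ c ∧ r = b ⬝ᵥ y} V) :
    (V ≤ D → IsGreatest {r : ℝ | ∃ (y : Fin m → ℝ) (w : ℝ),
        0 ≤ y ∧ 0 ≤ w ∧ Aᵀ *ᵥ y ≤ (1 + w) • c ∧ r = b ⬝ᵥ y - w * D} V) ∧
    (D < V → ¬ BddAbove {r : ℝ | ∃ (y : Fin m → ℝ) (w : ℝ),
        0 ≤ y ∧ 0 ≤ w ∧ Aᵀ *ᵥ y ≤ (1 + w) • c ∧ r = b ⬝ᵥ y - w * D}) := by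
  obtain ⟨⟨y₀, hy₀nn, hy₀f, hy₀v⟩, hub⟩ := hV
  constructor
  · intro hVD
    constructor
    · exact ⟨y₀, 0, hy₀nn, le_refl 0, by simpa using hy₀f, by simpa using hy₀v⟩
    · rintro r ⟨y, w, hynn, hwnn, hf, rfl⟩
      have h1w : (0:ℝ) < 1 + w := by linarith
      -- scaled point
      have hfeas : Aᵀ *ᵥ ((1 + w)⁻¹ • y) ≤ c := by
        intro i
        have := hf i
        rw [mulVec_smul]
        simp only [Pi.smul_apply, smul_eq_mul] at this ⊢
        rw [inv_mul_le_iff₀ h1w]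
        linarith [this]
      have hynn' : (0:Fin m → ℝ) ≤ (1 + w)⁻¹ • y := by
        intro i
        have := hynn i
        simp only [Pi.smul_apply, smul_eq_mul, Pi.zero_apply] at this ⊢
        positivity
      have hle : b ⬝ᵥ ((1 + w)⁻¹ • y) ≤ V :=
        hub ⟨(1 + w)⁻¹ • y, hynn', hfeas, rfl⟩
      rw [dotProduct_smul, smul_eq_mul, inv_mul_le_iff₀ h1w] at hle
      nlinarith
  · intro hDV hbdd
    obtain ⟨M, hM⟩ := hbdd
    set w : ℝ := max 0 ((M - V) / (V - D) + 1) with hw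
    have hwnn : 0 ≤ w := le_max_left _ _
    have hwgt : (M - V) / (V - D) < w := lt_of_lt_of_le (by linarith) (le_max_right _ _)
    have hVD : 0 < V - D := by linarith
    have hMlt : M < V + w * (V - D) := by
      have := (div_lt_iff₀ hVD).mp hwgt
      linarith
    have hmem : V + w * (V - D) ∈ {r : ℝ | ∃ (y : Fin m → ℝ) (w : ℝ),
        0 ≤ y ∧ 0 ≤ w ∧ Aᵀ *ᵥ y ≤ (1 + w) • c ∧ r = b ⬝ᵥ y - w * D} := by
      refine ⟨(1 + w) • y₀, w, ?_, hwnn, ?_, ?_⟩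
      · intro i
        have := hy₀nn i
        simp only [Pi.smul_apply, smul_eq_mul, Pi.zero_apply] at this ⊢
        positivity
      · intro i
        have := hy₀f i
        rw [mulVec_smul]
        simp only [Pi.smul_apply, smul_eq_mul] at this ⊢
        nlinarith
      · rw [dotProduct_smul, smul_eq_mul, ← hy₀v]
        ring
    have := hM hmem
    linarith
end

section
/- Let S ⊂ ℝ² be finite and nonempty, write L₁ = min{ a : (a,b) ∈ S } and L₂ = min{ b : (a,b) ∈ S, a = L₁ }. For γ ∈ (0,1) let W(γ) = min{ γa + (1-γ)b : (a,b) ∈ S }. Then lim_{γ→1⁻} W(γ) = L₁, and moreover lim_{γ→1⁻} (W(γ) − γL₁)/(1-γ) = L₂. -/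
open Filter Topology

/-- Asymptotics of the weighted-sum value W(γ) = min{ γa + (1-γ)b : (a,b) ∈ S }
over a finite nonempty S ⊂ ℝ²: with L₁ the minimum of the first coordinate over
S and L₂ the minimum of the second coordinate among first-coordinate minimizers,
W(γ) → L₁ as γ → 1⁻ and (W(γ) − γL₁)/(1-γ) → L₂ as γ → 1⁻. -/
theorem weighted_sum_value_asymptotics (S : Finset (ℝ × ℝ)) (hS : S.Nonempty)
    (L₁ L₂ : ℝ) (W : ℝ → ℝ)
    (hL₁ : IsLeast {a : ℝ | ∃ p ∈ S, p.1 = a} L₁)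
    (hL₂ : IsLeast {b : ℝ | ∃ p ∈ S, p.1 = L₁ ∧ p.2 = b} L₂)
    (hW : ∀ γ : ℝ, γ ∈ Set.Ioo (0:ℝ) 1 →
      IsLeast {r : ℝ | ∃ p ∈ S, r = γ * p.1 + (1 - γ) * p.2} (W γ)) :
    Tendsto W (nhdsWithin 1 (Set.Iio 1)) (nhds L₁) ∧
    Tendsto (fun γ => (W γ - γ * L₁) / (1 - γ)) (nhdsWithin 1 (Set.Iio 1))
      (nhds L₂) := by
  obtain ⟨p₀, hp₀S, hp₀1, hp₀2⟩ := hL₂.1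
  have h01 : ∀ᶠ γ in nhdsWithin (1:ℝ) (Set.Iio 1), γ ∈ Set.Ioo (0:ℝ) 1 :=
    Ioo_mem_nhdsLT_of_mem (by simp)
  have key : W =ᶠ[nhdsWithin (1:ℝ) (Set.Iio 1)] fun γ => γ * L₁ + (1 - γ) * L₂ := by
    have hall : ∀ᶠ γ in nhdsWithin (1:ℝ) (Set.Iio 1),
        ∀ p ∈ S, γ * L₁ + (1 - γ) * L₂ ≤ γ * p.1 + (1 - γ) * p.2 := by
      rw [eventually_all_finset]
      intro p hp
      by_cases h1 : p.1 = L₁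
      · filter_upwards [h01] with γ hγ
        have h2 : L₂ ≤ p.2 := hL₂.2 ⟨p, hp, h1, rfl⟩
        nlinarith [hγ.2]
      · have hlt : L₁ < p.1 := lt_of_le_of_ne (hL₁.2 ⟨p, hp, rfl⟩) (Ne.symm h1)
        have hc : Tendsto (fun γ : ℝ => γ * (p.1 - L₁) + (1 - γ) * (p.2 - L₂))
            (nhdsWithin 1 (Set.Iio 1)) (nhds (p.1 - L₁)) := by
          have hcont : Continuous fun γ : ℝ => γ * (p.1 - L₁) + (1 - γ) * (p.2 - L₂) := by
            continuity
          have := (hcont.tendsto 1).mono_left (nhdsWithin_le_nhds (s := Set.Iio 1))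
          simpa using this
        have hpos := hc.eventually (eventually_gt_nhds (by linarith : (0:ℝ) < p.1 - L₁))
        filter_upwards [hpos] with γ hγ
        nlinarith
    filter_upwards [h01, hall] with γ hγ hγall
    refine (hW γ hγ).unique ⟨⟨p₀, hp₀S, by rw [hp₀1, hp₀2]⟩, ?_⟩
    rintro r ⟨p, hp, rfl⟩
    exact hγall p hp
  constructor
  · have hlim : Tendsto (fun γ : ℝ => γ * L₁ + (1 - γ) * L₂)
        (nhdsWithin 1 (Set.Iio 1)) (nhds L₁) := by
      have hc : Continuous fun γ : ℝ => γ * L₁ + (1 - γ) * L₂ := by continuity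
      have := (hc.tendsto 1).mono_left (nhdsWithin_le_nhds (s := Set.Iio 1))
      simpa using this
    exact hlim.congr' key.symm
  · have hself : ∀ᶠ γ in nhdsWithin (1:ℝ) (Set.Iio 1), γ < (1:ℝ) :=
      eventually_mem_nhdsWithin.mono fun x h => h
    have heq : ∀ᶠ γ in nhdsWithin (1:ℝ) (Set.Iio 1),
        L₂ = (W γ - γ * L₁) / (1 - γ) := by
      filter_upwards [key, hself] with γ hγ hγ1
      have hne : (1:ℝ) - γ ≠ 0 := by linarith
      rw [hγ]
      field_simp
      ring
    exact Tendsto.congr' heq tendsto_const_nhds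
end
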